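/- arXiv:2201.08946 — 4 statements merged into one kernel-verified Lean document; each statement's English description precedes it below -/
import Mathlib

section
/- Under the MAR setup, for every integrable, 𝒢-measurable random variable H : Ω → ℝ, the random variable (R/π)·H is integrable and its conditional expectation given m satisfies E[(R/π)·H | m] = E[H | m] almost surely. -/
open MeasureTheory ProbabilityTheory

/-- Under MAR, for every integrable `𝒢`-measurable `H`, the weighted variable `(R/π)·H`
is integrable and `E[(R/π)·H | m] = E[H | m]` a.s. -/
theorem stmt1 {Ω : Type*} (m 𝒢 : MeasurableSpace Ω) [mΩ : MeasurableSpace Ω] {P : Measure Ω} [IsProbabilityMeasure P]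
    (hm𝒢 : m ≤ 𝒢) (h𝒢 : 𝒢 ≤ mΩ)
    (R π : Ω → ℝ) (hR : Measurable R) (hR01 : ∀ ω, R ω = 0 ∨ R ω = 1)
    (hπmeas : StronglyMeasurable[m] π) (ε : ℝ) (hε : 0 < ε)
    (hπbdd : ∀ᵐ ω ∂P, ε ≤ π ω ∧ π ω ≤ 1)
    (hMAR : π =ᵐ[P] P[R | 𝒢])
    (H : Ω → ℝ) (hHmeas : StronglyMeasurable[𝒢] H) (hHint : Integrable H P) :
    Integrable (fun ω => (R ω / π ω) * H ω) P ∧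
      P[(fun ω => (R ω / π ω) * H ω) | m] =ᵐ[P] P[H | m] := by
  -- g = H/π is 𝒢-strongly measurable
  set g : Ω → ℝ := fun ω => H ω / π ω with hg
  have hgmeas : StronglyMeasurable[𝒢] g := (hHmeas.measurable.div (hπmeas.mono hm𝒢).measurable).stronglyMeasurable
  have hfg : (fun ω => (R ω / π ω) * H ω) = g * R := by
    funext ω; simp only [Pi.mul_apply, hg]; ring
  have hRabs : ∀ ω, |R ω| ≤ 1 := by
    intro ω; rcases hR01 ω with h | h <;> simp [h]
  have hRint : Integrable R P := by
    refine Integrable.mono' (integrable_const 1) (hR.stronglyMeasurable.aestronglyMeasurable) ?_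
    exact Filter.Eventually.of_forall fun ω => by simpa using hRabs ω
  have hint : Integrable (g * R) P := by
    refine Integrable.mono' (hHint.norm.const_mul ε⁻¹)
      ((hgmeas.mono h𝒢).aestronglyMeasurable.mul (hR.stronglyMeasurable.aestronglyMeasurable)) ?_
    filter_upwards [hπbdd] with ω ⟨h1, h2⟩
    have hπpos : 0 < π ω := lt_of_lt_of_le hε h1
    calc ‖g ω * R ω‖ ≤ ‖g ω‖ * 1 := by
          rw [norm_mul]
          exact mul_le_mul_of_nonneg_left (by simpa using hRabs ω) (norm_nonneg _)
      _ = |H ω| / π ω := by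
          simp [hg, abs_div, abs_of_pos hπpos]
      _ ≤ |H ω| / ε := by gcongr
      _ = ε⁻¹ * ‖H ω‖ := by rw [Real.norm_eq_abs, div_eq_inv_mul]
  have hint' : Integrable (fun ω => (R ω / π ω) * H ω) P := by rw [hfg]; exact hint
  refine ⟨hint', ?_⟩
  -- E[g·R | 𝒢] = g · π = H a.e.
  have hpull : P[g * R | 𝒢] =ᵐ[P] g * P[R | 𝒢] :=
    condExp_mul_of_stronglyMeasurable_left hgmeas hint hRint
  have hGH : P[g * R | 𝒢] =ᵐ[P] H := by
    filter_upwards [hpull, hMAR, hπbdd] with ω h1 h2 ⟨h3, _⟩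
    have hπne : π ω ≠ 0 := ne_of_gt (lt_of_lt_of_le hε h3)
    rw [h1]
    simp only [Pi.mul_apply, hg, ← h2]
    field_simp
  calc P[(fun ω => (R ω / π ω) * H ω) | m] = P[g * R | m] := by rw [hfg]
    _ =ᵐ[P] P[P[g * R | 𝒢] | m] := (condExp_condExp_of_le hm𝒢 h𝒢).symm
    _ =ᵐ[P] P[H | m] := condExp_congr_ae hGH
end

section
/- Under the MAR setup, let H : Ω → ℝ be 𝒢-measurable and square-integrable, let ρ = E[H | m], and set μ = E[H], ξ_I = (R/π)·H and ξ_A = (R/π)·H + (1 − R/π)·ρ. Then E[ξ_I] = E[ξ_A] = μ, and E[(ξ_I − μ)²] = E[(ξ_A − μ)²] + E[((R/π − 1)·ρ)²]; in particular Var(ξ_A) ≤ Var(ξ_I). -/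
open MeasureTheory ProbabilityTheory

lemma aux_mul_int {Ω : Type*} [mΩ : MeasurableSpace Ω] {P : Measure Ω}
    {f g : Ω → ℝ} (hf : MemLp f 2 P) (hg : MemLp g 2 P) :
    Integrable (fun ω => f ω * g ω) P := by
  refine Integrable.mono' (hf.integrable_sq.add hg.integrable_sq) (hf.1.mul hg.1) ?_
  filter_upwards with ω
  rw [Real.norm_eq_abs, abs_mul]
  simp only [Pi.add_apply]
  nlinarith [sq_abs (f ω), sq_abs (g ω), abs_nonneg (f ω), abs_nonneg (g ω),
    sq_nonneg (|f ω| - |g ω|)]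

lemma aux_condexp_L2 {Ω : Type*} [mΩ : MeasurableSpace Ω] {P : Measure Ω}
    [IsProbabilityMeasure P] {m : MeasurableSpace Ω} (hm : m ≤ mΩ)
    {H : Ω → ℝ} (hH2 : MemLp H 2 P) : MemLp (P[H|m]) 2 P := by
  have hHi : Integrable H P := hH2.integrable one_le_two
  set f : Lp ℝ 2 P := hH2.toLp H with hf
  have hfg : ((condExpL2 ℝ ℝ hm f : Lp ℝ 2 P) : Ω → ℝ) =ᵐ[P] P[H|m] := by
    refine ae_eq_condExp_of_forall_setIntegral_eq hm hHi ?_ ?_ ?_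
    · intro s hs hμs
      exact integrableOn_condExpL2_of_measure_ne_top hm hμs.ne f
    · intro s hs hμs
      rw [integral_condExpL2_eq (𝕜 := ℝ) hm f hs hμs.ne]
      exact integral_congr_ae (ae_restrict_of_ae hH2.coeFn_toLp)
    · exact aestronglyMeasurable_condExpL2 hm f
  exact (Lp.memLp _).ae_eq hfg

/-- Under MAR, with `H` square-integrable and `𝒢`-measurable, `ρ = E[H | m]`,
`μv = E[H]`, `ξ_I = (R/π)·H` and `ξ_A = (R/π)·H + (1 − R/π)·ρ`:
both `ξ_I` and `ξ_A` have mean `μv`, and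
`E[(ξ_I − μv)²] = E[(ξ_A − μv)²] + E[((R/π − 1)·ρ)²]`; in particular
`Var(ξ_A) ≤ Var(ξ_I)`. -/
theorem stmt6 {Ω : Type*} (m 𝒢 : MeasurableSpace Ω) [mΩ : MeasurableSpace Ω] {P : Measure Ω} [IsProbabilityMeasure P]
    (hm𝒢 : m ≤ 𝒢) (h𝒢 : 𝒢 ≤ mΩ)
    (R π : Ω → ℝ) (hR : Measurable R) (hR01 : ∀ ω, R ω = 0 ∨ R ω = 1)
    (hπmeas : StronglyMeasurable[m] π) (ε : ℝ) (hε : 0 < ε)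
    (hπbdd : ∀ᵐ ω ∂P, ε ≤ π ω ∧ π ω ≤ 1)
    (hMAR : π =ᵐ[P] P[R | 𝒢])
    (H : Ω → ℝ) (hHmeas : StronglyMeasurable[𝒢] H) (hH2 : MemLp H 2 P)
    (ρ : Ω → ℝ) (hρ : ρ = P[H | m])
    (μv : ℝ) (hμv : μv = ∫ ω, H ω ∂P)
    (ξI ξA : Ω → ℝ)
    (hξI : ξI = fun ω => (R ω / π ω) * H ω)
    (hξA : ξA = fun ω => (R ω / π ω) * H ω + (1 - R ω / π ω) * ρ ω) :
    (∫ ω, ξI ω ∂P = μv) ∧ (∫ ω, ξA ω ∂P = μv) ∧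
      (∫ ω, (ξI ω - μv) ^ 2 ∂P
        = (∫ ω, (ξA ω - μv) ^ 2 ∂P) + ∫ ω, ((R ω / π ω - 1) * ρ ω) ^ 2 ∂P) ∧
      (∫ ω, (ξA ω - μv) ^ 2 ∂P ≤ ∫ ω, (ξI ω - μv) ^ 2 ∂P) := by
  have hm : m ≤ mΩ := hm𝒢.trans h𝒢
  -- basic facts about R
  have hR01' : ∀ ω, 0 ≤ R ω ∧ R ω ≤ 1 ∧ R ω * R ω = R ω := by
    intro ω; rcases hR01 ω with h | h <;> simp [h]
  have hRM : Measurable[mΩ] R := hR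
  have hRaesm : AEStronglyMeasurable[mΩ] R P := hRM.aestronglyMeasurable (μ := P)
  have hRi : Integrable R P := by
    refine Integrable.mono' (integrable_const (1:ℝ) (μ := P)) hRaesm ?_
    filter_upwards with ω
    rw [Real.norm_eq_abs, abs_of_nonneg (hR01' ω).1]
    exact (hR01' ω).2.1
  -- measurability facts
  have hπMm : Measurable[m] π := hπmeas.measurable
  have hπMG : Measurable[𝒢] π := (hπmeas.mono hm𝒢).measurable
  have hπM : Measurable[mΩ] π := (hπmeas.mono hm).measurable
  have hρm : StronglyMeasurable[m] ρ := hρ ▸ stronglyMeasurable_condExp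
  have hρMm : Measurable[m] ρ := hρm.measurable
  have hρMG : Measurable[𝒢] ρ := (hρm.mono hm𝒢).measurable
  have hρM : Measurable[mΩ] ρ := (hρm.mono hm).measurable
  have hHMG : Measurable[𝒢] H := hHmeas.measurable
  have hHM : Measurable[mΩ] H := (hHmeas.mono h𝒢).measurable
  have hρ2 : MemLp ρ 2 P := by rw [hρ]; exact aux_condexp_L2 (mΩ := mΩ) hm hH2
  have hHi : Integrable H P := hH2.integrable one_le_two
  have hρi : Integrable ρ P := hρ2.integrable one_le_two
  have hπpos : ∀ᵐ ω ∂P, 0 < π ω := by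
    filter_upwards [hπbdd] with ω h; exact lt_of_lt_of_le hε h.1
  -- the weight a = R/π
  have hasm : AEStronglyMeasurable[mΩ] (fun ω => R ω / π ω) P :=
    (hRM.div hπM).aestronglyMeasurable (μ := P)
  have habd : ∀ᵐ ω ∂P, |R ω / π ω| ≤ 1/ε := by
    filter_upwards [hπbdd] with ω h
    rw [abs_div, abs_of_nonneg (hR01' ω).1, abs_of_pos (lt_of_lt_of_le hε h.1)]
    exact div_le_div₀ (by norm_num) (hR01' ω).2.1 hε h.1
  -- multiplying an L² function by a keeps it in L²
  have key_mul : ∀ {g : Ω → ℝ}, MemLp g 2 P →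
      MemLp (fun ω => (R ω / π ω) * g ω) 2 P := by
    intro g hg
    refine MemLp.of_le_mul (c := 1/ε) hg (hasm.mul hg.1) ?_
    filter_upwards [habd] with ω h
    rw [Real.norm_eq_abs, Real.norm_eq_abs, abs_mul]
    exact mul_le_mul_of_nonneg_right h (abs_nonneg _)
  -- multiplying an integrable function by a keeps it integrable
  have key_int : ∀ {g : Ω → ℝ}, Integrable g P →
      Integrable (fun ω => (R ω / π ω) * g ω) P := by
    intro g hg
    refine Integrable.mono' (hg.norm.const_mul (1/ε)) (hasm.mul hg.1) ?_
    filter_upwards [habd] with ω h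
    rw [Real.norm_eq_abs, abs_mul]
    exact mul_le_mul_of_nonneg_right h (abs_nonneg _)
  -- Lemma L1 : ∫ G·R = ∫ G·π for 𝒢-measurable integrable G with G·R integrable
  have L1 : ∀ (G : Ω → ℝ), StronglyMeasurable[𝒢] G → Integrable G P →
      Integrable (fun ω => G ω * R ω) P →
      ∫ ω, G ω * R ω ∂P = ∫ ω, G ω * π ω ∂P := by
    intro G hGm hGi hGRi
    have h2 : P[G * R | 𝒢] =ᵐ[P] G * P[R | 𝒢] :=
      condExp_mul_of_stronglyMeasurable_left hGm (by exact hGRi) hRi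
    have h1 : P[(fun ω => G ω * R ω) | 𝒢] =ᵐ[P] fun ω => G ω * π ω := by
      refine h2.trans ?_
      filter_upwards [hMAR] with ω h
      simp only [Pi.mul_apply, ← h]
    calc ∫ ω, G ω * R ω ∂P = ∫ ω, (P[(fun ω => G ω * R ω) | 𝒢]) ω ∂P :=
          (integral_condExp h𝒢).symm
      _ = ∫ ω, G ω * π ω ∂P := integral_congr_ae h1
  -- Lemma L2 : ∫ K·H = ∫ K·ρ for m-measurable K with K·H integrable
  have L2 : ∀ (K : Ω → ℝ), StronglyMeasurable[m] K →
      Integrable (fun ω => K ω * H ω) P →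
      ∫ ω, K ω * H ω ∂P = ∫ ω, K ω * ρ ω ∂P := by
    intro K hKm hKHi
    have h2 : P[K * H | m] =ᵐ[P] K * P[H | m] :=
      condExp_mul_of_stronglyMeasurable_left hKm (by exact hKHi) hHi
    calc ∫ ω, K ω * H ω ∂P = ∫ ω, (P[(fun ω => K ω * H ω) | m]) ω ∂P :=
          (integral_condExp hm).symm
      _ = ∫ ω, K ω * ρ ω ∂P := by
          refine integral_congr_ae (h2.trans ?_)
          filter_upwards with ω
          simp [hρ]
  -- Lemma L3 : ∫ a·G = ∫ G for 𝒢-measurable integrable G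
  have L3 : ∀ (G : Ω → ℝ), StronglyMeasurable[𝒢] G → Integrable G P →
      ∫ ω, (R ω / π ω) * G ω ∂P = ∫ ω, G ω ∂P := by
    intro G hGm hGi
    have hG'm : StronglyMeasurable[𝒢] (fun ω => G ω / π ω) :=
      (hGm.measurable.div hπMG).stronglyMeasurable
    have hG'i : Integrable (fun ω => G ω / π ω) P := by
      refine Integrable.mono' (hGi.norm.const_mul (1/ε))
        ((hGm.mono h𝒢).measurable.div hπM).aestronglyMeasurable ?_
      filter_upwards [hπbdd] with ω h
      have hπp : 0 < π ω := lt_of_lt_of_le hε h.1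
      rw [Real.norm_eq_abs, Real.norm_eq_abs, abs_div, abs_of_pos hπp, one_div,
        inv_mul_eq_div, div_le_div_iff₀ hπp hε]
      exact mul_le_mul_of_nonneg_left h.1 (abs_nonneg _)
    have hG'Ri : Integrable (fun ω => (G ω / π ω) * R ω) P := by
      refine Integrable.mono' hG'i.norm (hG'i.1.mul hRaesm) ?_
      filter_upwards with ω
      rw [Real.norm_eq_abs, Real.norm_eq_abs, abs_mul]
      calc |G ω / π ω| * |R ω| ≤ |G ω / π ω| * 1 := by
            refine mul_le_mul_of_nonneg_left ?_ (abs_nonneg _)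
            rw [abs_of_nonneg (hR01' ω).1]; exact (hR01' ω).2.1
        _ = |G ω / π ω| := mul_one _
    have e1 : (fun ω => (R ω / π ω) * G ω) = fun ω => (G ω / π ω) * R ω := by
      funext ω; rw [div_mul_eq_mul_div, div_mul_eq_mul_div, mul_comm]
    rw [e1, L1 _ hG'm hG'i hG'Ri]
    refine integral_congr_ae ?_
    filter_upwards [hπpos] with ω h
    rw [div_mul_cancel₀ _ (ne_of_gt h)]
  -- means
  have meanI : ∫ ω, (R ω / π ω) * H ω ∂P = ∫ ω, H ω ∂P := L3 H hHmeas hHi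
  have meanρ : ∫ ω, ρ ω ∂P = ∫ ω, H ω ∂P := by
    rw [hρ]; exact integral_condExp hm
  have meanaρ : ∫ ω, (R ω / π ω) * ρ ω ∂P = ∫ ω, ρ ω ∂P :=
    L3 ρ (hρm.mono hm𝒢) hρi
  have haH2 : MemLp (fun ω => (R ω / π ω) * H ω) 2 P := key_mul hH2
  have haρ2 : MemLp (fun ω => (R ω / π ω) * ρ ω) 2 P := key_mul hρ2
  have haHi : Integrable (fun ω => (R ω / π ω) * H ω) P := haH2.integrable one_le_two
  have haρi : Integrable (fun ω => (R ω / π ω) * ρ ω) P := haρ2.integrable one_le_two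
  have hsubi : Integrable (fun ω => ρ ω - (R ω / π ω) * ρ ω) P := hρi.sub haρi
  -- first conjunct
  have c1 : ∫ ω, ξI ω ∂P = μv := by
    rw [hξI, hμv, meanI]
  -- second conjunct
  have exi2 : ∫ ω, ξA ω ∂P
      = ∫ ω, ((R ω / π ω) * H ω + (ρ ω - (R ω / π ω) * ρ ω)) ∂P := by
    rw [hξA]
    exact integral_congr_ae (Filter.Eventually.of_forall fun ω => by ring)
  have c2 : ∫ ω, ξA ω ∂P = μv := by
    rw [exi2, integral_add haHi hsubi, integral_sub hρi haρi,
      meanI, meanaρ, meanρ, hμv]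
    ring
  -- L² memberships of the centered variables
  have hξA2 : MemLp (fun ω => ξA ω - μv) 2 P := by
    have e : (fun ω => ξA ω - μv)
        = fun ω => ((R ω / π ω) * H ω + (ρ ω - (R ω / π ω) * ρ ω)) - μv := by
      funext ω; rw [hξA]; ring
    rw [e]
    exact (haH2.add (hρ2.sub haρ2)).sub (memLp_const μv)
  have hD2 : MemLp (fun ω => (R ω / π ω - 1) * ρ ω) 2 P := by
    have e : (fun ω => (R ω / π ω - 1) * ρ ω)
        = fun ω => (R ω / π ω) * ρ ω - ρ ω := by
      funext ω; ring
    rw [e]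
    exact haρ2.sub hρ2
  -- term B : ∫ a·K = ∫ K with K = (ρ - μv)·ρ
  have hKm : StronglyMeasurable[m] (fun ω => (ρ ω - μv) * ρ ω) :=
    ((hρMm.sub (@measurable_const ℝ Ω _ m μv)).mul hρMm).stronglyMeasurable
  have hKi : Integrable (fun ω => (ρ ω - μv) * ρ ω) P :=
    aux_mul_int (mΩ := mΩ) (hρ2.sub (memLp_const μv)) hρ2
  have haKi : Integrable (fun ω => (R ω / π ω) * ((ρ ω - μv) * ρ ω)) P := key_int hKi
  have termB : ∫ ω, (R ω / π ω) * ((ρ ω - μv) * ρ ω) ∂P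
      = ∫ ω, (ρ ω - μv) * ρ ω ∂P :=
    L3 _ (hKm.mono hm𝒢) hKi
  -- term A : with G0 = ((1-π)/π²)·(H-ρ)·ρ we have ∫ G0·R = ∫ G0·π = 0
  set G0 : Ω → ℝ := fun ω => ((1 - π ω) / (π ω)^2) * ((H ω - ρ ω) * ρ ω) with hG0def
  set K2 : Ω → ℝ := fun ω => ((1 - π ω) / π ω) * ρ ω with hK2def
  have hHρρi : Integrable (fun ω => (H ω - ρ ω) * ρ ω) P :=
    aux_mul_int (mΩ := mΩ) (hH2.sub hρ2) hρ2
  have hρHi : Integrable (fun ω => ρ ω * H ω) P := aux_mul_int (mΩ := mΩ) hρ2 hH2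
  have hρρi : Integrable (fun ω => ρ ω * ρ ω) P := aux_mul_int (mΩ := mΩ) hρ2 hρ2
  have hG0M : Measurable[mΩ] G0 :=
    (((@measurable_const ℝ Ω _ mΩ 1).sub hπM).div (hπM.pow_const 2)).mul
      ((hHM.sub hρM).mul hρM)
  have hG0m : StronglyMeasurable[𝒢] G0 :=
    ((((@measurable_const ℝ Ω _ 𝒢 1).sub hπMG).div (hπMG.pow_const 2)).mul
      ((hHMG.sub hρMG).mul hρMG)).stronglyMeasurable
  have hcbd : ∀ᵐ ω ∂P, |(1 - π ω) / (π ω)^2| ≤ 1/ε^2 := by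
    filter_upwards [hπbdd] with ω h
    have hπp : 0 < π ω := lt_of_lt_of_le hε h.1
    rw [abs_div, abs_of_pos (by positivity : (0:ℝ) < (π ω)^2)]
    refine div_le_div₀ (by norm_num) ?_ (by positivity) (by nlinarith)
    rw [abs_of_nonneg (by linarith : (0:ℝ) ≤ 1 - π ω)]; linarith
  have hc2bd : ∀ᵐ ω ∂P, |(1 - π ω) / π ω| ≤ 1/ε := by
    filter_upwards [hπbdd] with ω h
    have hπp : 0 < π ω := lt_of_lt_of_le hε h.1
    rw [abs_div, abs_of_pos hπp]
    refine div_le_div₀ (by norm_num) ?_ hε h.1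
    rw [abs_of_nonneg (by linarith : (0:ℝ) ≤ 1 - π ω)]; linarith
  have hG0i : Integrable G0 P := by
    refine Integrable.mono' (hHρρi.norm.const_mul (1/ε^2))
      hG0M.aestronglyMeasurable ?_
    filter_upwards [hcbd] with ω h
    simp only [hG0def]
    rw [Real.norm_eq_abs, Real.norm_eq_abs, abs_mul]
    exact mul_le_mul_of_nonneg_right h (abs_nonneg _)
  have hG0Ri : Integrable (fun ω => G0 ω * R ω) P := by
    refine Integrable.mono' hG0i.norm (hG0M.aestronglyMeasurable.mul hRaesm) ?_
    filter_upwards with ω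
    rw [Real.norm_eq_abs, Real.norm_eq_abs, abs_mul]
    calc |G0 ω| * |R ω| ≤ |G0 ω| * 1 := by
          refine mul_le_mul_of_nonneg_left ?_ (abs_nonneg _)
          rw [abs_of_nonneg (hR01' ω).1]; exact (hR01' ω).2.1
      _ = |G0 ω| := mul_one _
  have hK2m : StronglyMeasurable[m] K2 :=
    ((((@measurable_const ℝ Ω _ m 1).sub hπMm).div hπMm).mul hρMm).stronglyMeasurable
  have hK2M : Measurable[mΩ] K2 :=
    (((@measurable_const ℝ Ω _ mΩ 1).sub hπM).div hπM).mul hρM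
  have hK2Hi : Integrable (fun ω => K2 ω * H ω) P := by
    refine Integrable.mono' (hρHi.norm.const_mul (1/ε))
      ((hK2M.mul hHM).aestronglyMeasurable) ?_
    filter_upwards [hc2bd] with ω h
    simp only [hK2def]
    rw [Real.norm_eq_abs, Real.norm_eq_abs, abs_mul, abs_mul, mul_assoc, ← abs_mul]
    exact mul_le_mul_of_nonneg_right h (abs_nonneg _)
  have hK2ρi : Integrable (fun ω => K2 ω * ρ ω) P := by
    refine Integrable.mono' (hρρi.norm.const_mul (1/ε))
      ((hK2M.mul hρM).aestronglyMeasurable) ?_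
    filter_upwards [hc2bd] with ω h
    simp only [hK2def]
    rw [Real.norm_eq_abs, Real.norm_eq_abs, abs_mul, abs_mul, mul_assoc, ← abs_mul]
    exact mul_le_mul_of_nonneg_right h (abs_nonneg _)
  have termA : ∫ ω, G0 ω * R ω ∂P = 0 := by
    rw [L1 G0 hG0m hG0i hG0Ri]
    have e : ∀ᵐ ω ∂P, G0 ω * π ω = K2 ω * H ω - K2 ω * ρ ω := by
      filter_upwards [hπpos] with ω h
      have hπne : π ω ≠ 0 := ne_of_gt h
      simp only [hG0def, hK2def]
      field_simp
    rw [integral_congr_ae e, integral_sub hK2Hi hK2ρi, L2 K2 hK2m hK2Hi, sub_self]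
  -- cross term pointwise identity
  have crossId : ∀ᵐ ω ∂P, (ξA ω - μv) * ((R ω / π ω - 1) * ρ ω)
      = G0 ω * R ω
        + ((R ω / π ω) * ((ρ ω - μv) * ρ ω) - (ρ ω - μv) * ρ ω) := by
    filter_upwards [hπpos] with ω h
    have hπne : π ω ≠ 0 := ne_of_gt h
    have hRR := (hR01' ω).2.2
    simp only [hξA, hG0def]
    field_simp
    linear_combination (ρ ω * (H ω - ρ ω)) * hRR
  have hcrossInt : Integrable
      (fun ω => (ξA ω - μv) * ((R ω / π ω - 1) * ρ ω)) P :=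
    aux_mul_int (mΩ := mΩ) hξA2 hD2
  have cross0 : ∫ ω, (ξA ω - μv) * ((R ω / π ω - 1) * ρ ω) ∂P = 0 := by
    have hsub2 : Integrable
        (fun ω => (R ω / π ω) * ((ρ ω - μv) * ρ ω) - (ρ ω - μv) * ρ ω) P :=
      haKi.sub hKi
    rw [integral_congr_ae crossId, integral_add hG0Ri hsub2,
      integral_sub haKi hKi, termA, termB, sub_self, add_zero]
  -- variance decomposition
  have IξA2 : Integrable (fun ω => (ξA ω - μv)^2) P := hξA2.integrable_sq
  have ID2 : Integrable (fun ω => ((R ω / π ω - 1) * ρ ω)^2) P := hD2.integrable_sq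
  have pt : (fun ω => (ξI ω - μv)^2)
      = fun ω => (ξA ω - μv)^2
          + (2 * ((ξA ω - μv) * ((R ω / π ω - 1) * ρ ω))
            + ((R ω / π ω - 1) * ρ ω)^2) := by
    funext ω; rw [hξI, hξA]; ring
  have c3 : ∫ ω, (ξI ω - μv) ^ 2 ∂P
      = (∫ ω, (ξA ω - μv) ^ 2 ∂P) + ∫ ω, ((R ω / π ω - 1) * ρ ω) ^ 2 ∂P := by
    have h2i : Integrable
        (fun ω => 2 * ((ξA ω - μv) * ((R ω / π ω - 1) * ρ ω))) P :=
      hcrossInt.const_mul 2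
    have hsum : Integrable
        (fun ω => 2 * ((ξA ω - μv) * ((R ω / π ω - 1) * ρ ω))
          + ((R ω / π ω - 1) * ρ ω)^2) P := h2i.add ID2
    rw [pt, integral_add IξA2 hsum, integral_add h2i ID2,
      integral_const_mul, cross0, mul_zero, zero_add]
  have c4 : ∫ ω, (ξA ω - μv) ^ 2 ∂P ≤ ∫ ω, (ξI ω - μv) ^ 2 ∂P := by
    have hnn : 0 ≤ ∫ ω, ((R ω / π ω - 1) * ρ ω) ^ 2 ∂P :=
      integral_nonneg fun ω => sq_nonneg _
    linarith [c3]
  exact ⟨c1, c2, c3, c4⟩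
end

section
/- Let (g_n)_{n∈ℕ} be independent, identically distributed, integrable real-valued random variables on a probability space (Ω, ℱ, P), with g_n = (R_n/π_n)·H_n for random variables R_n, π_n, H_n, and suppose that for n = 0 the MAR setup holds with R = R_0, π = π_0, H = H_0 (for some sub-σ-algebras m ⊆ 𝒢 ⊆ ℱ). Then the sample averages n⁻¹ Σ_{i=0}^{n−1} g_i converge almost surely, as n → ∞, to E[H_0]. -/
open MeasureTheory ProbabilityTheory Filter

/-- Strong-law consistency of the IPW sample average: if `g_n = (R_n/π_n)·H_n` are
iid integrable and the MAR setup holds at index `0`, then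
`n⁻¹ ∑_{i<n} g_i → E[H_0]` almost surely. -/
theorem stmt8 {Ω : Type*} (m 𝒢 : MeasurableSpace Ω) [mΩ : MeasurableSpace Ω] {P : Measure Ω} [IsProbabilityMeasure P]
    (g R π H : ℕ → Ω → ℝ)
    (hg : ∀ n ω, g n ω = (R n ω / π n ω) * H n ω)
    (hgmeas : ∀ n, Measurable (g n))
    (hgint : ∀ n, Integrable (g n) P)
    (hindep : iIndepFun g P)
    (hident : ∀ n, IdentDistrib (g n) (g 0) P P)
    -- the MAR setup for n = 0:
    (hm𝒢 : m ≤ 𝒢) (h𝒢 : 𝒢 ≤ mΩ)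
    (hR : Measurable (R 0)) (hR01 : ∀ ω, R 0 ω = 0 ∨ R 0 ω = 1)
    (hπmeas : StronglyMeasurable[m] (π 0)) (ε : ℝ) (hε : 0 < ε)
    (hπbdd : ∀ᵐ ω ∂P, ε ≤ π 0 ω ∧ π 0 ω ≤ 1)
    (hMAR : π 0 =ᵐ[P] P[R 0 | 𝒢])
    (hHmeas : StronglyMeasurable[𝒢] (H 0)) (hHint : Integrable (H 0) P) :
    ∀ᵐ ω ∂P, Tendsto (fun n : ℕ => (n : ℝ)⁻¹ * ∑ i ∈ Finset.range n, g i ω)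
      atTop (nhds (∫ ω, H 0 ω ∂P)) := by
  -- Step 1: identify E[g 0] with E[H 0].
  set f : Ω → ℝ := fun ω => H 0 ω / π 0 ω with hf_def
  have hf𝒢 : StronglyMeasurable[𝒢] f :=
    ((hHmeas.measurable).div (hπmeas.measurable.mono hm𝒢 le_rfl)).stronglyMeasurable
  have hfg : f * R 0 = g 0 := by
    funext ω; rw [hg 0 ω]; simp only [hf_def, Pi.mul_apply]; ring
  have hRint : Integrable (R 0) P := by
    refine ⟨hR.aestronglyMeasurable, ?_⟩
    refine HasFiniteIntegral.mono' (g := fun _ => (1 : ℝ))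
      (hasFiniteIntegral_const 1) ?_
    filter_upwards with ω
    rcases hR01 ω with h | h <;> simp [h]
  have hfRint : Integrable (f * R 0) P := by rw [hfg]; exact hgint 0
  have hcond : P[f * R 0 | 𝒢] =ᵐ[P] f * P[R 0 | 𝒢] :=
    condExp_mul_of_stronglyMeasurable_left hf𝒢 hfRint hRint
  have hint_eq : ∫ ω, g 0 ω ∂P = ∫ ω, H 0 ω ∂P := by
    have h1 : ∫ ω, g 0 ω ∂P = ∫ ω, (P[f * R 0 | 𝒢]) ω ∂P := by
      rw [integral_condExp h𝒢, ← hfg]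
    rw [h1]
    refine integral_congr_ae ?_
    filter_upwards [hcond, hMAR, hπbdd] with ω h1 h2 h3
    rw [h1, Pi.mul_apply, ← h2, hf_def]
    exact div_mul_cancel₀ _ (by linarith [h3.1])
  rw [← hint_eq]
  have hpind : Pairwise (Function.onFun (IndepFun · · P) g) := fun i j hij =>
    hindep.indepFun hij
  have := strong_law_ae g (hgint 0) hpind hident
  filter_upwards [this] with ω hω
  simpa [smul_eq_mul] using hω
end

section
/- Let (g_n)_{n∈ℕ} be independent, identically distributed, integrable real-valued random variables on a probability space (Ω, ℱ, P), with g_n = (R_n/π_n)·H_n + (1 − R_n/π_n)·ρ̃_n, and suppose that for n = 0 the MAR setup holds with R = R_0, π = π_0, H = H_0 (for some sub-σ-algebras m ⊆ 𝒢 ⊆ ℱ) and that ρ̃_0 is any m-measurable integrable random variable (a possibly misspecified model for E[H_0 | m]). Then n⁻¹ Σ_{i=0}^{n−1} g_i converges almost surely, as n → ∞, to E[H_0]. -/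
open MeasureTheory ProbabilityTheory Filter

/-- Strong-law consistency of the AIPW sample average under a correctly specified
missingness model: if `g_n = (R_n/π_n)·H_n + (1 − R_n/π_n)·ρmis_n` are iid integrable,
the MAR setup holds at index `0`, and `ρmis_0` is any `m`-measurable integrable random
variable (a possibly misspecified model for `E[H_0 | m]`), then
`n⁻¹ ∑_{i<n} g_i → E[H_0]` almost surely. -/
theorem stmt9 {Ω : Type*} (m 𝒢 : MeasurableSpace Ω) [mΩ : MeasurableSpace Ω] {P : Measure Ω} [IsProbabilityMeasure P]
    (g R π H ρmis : ℕ → Ω → ℝ)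
    (hg : ∀ n ω, g n ω = (R n ω / π n ω) * H n ω + (1 - R n ω / π n ω) * ρmis n ω)
    (hgmeas : ∀ n, Measurable (g n))
    (hgint : ∀ n, Integrable (g n) P)
    (hindep : iIndepFun g P)
    (hident : ∀ n, IdentDistrib (g n) (g 0) P P)
    -- the MAR setup for n = 0:
    (hm𝒢 : m ≤ 𝒢) (h𝒢 : 𝒢 ≤ mΩ)
    (hR : Measurable (R 0)) (hR01 : ∀ ω, R 0 ω = 0 ∨ R 0 ω = 1)
    (hπmeas : StronglyMeasurable[m] (π 0)) (ε : ℝ) (hε : 0 < ε)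
    (hπbdd : ∀ᵐ ω ∂P, ε ≤ π 0 ω ∧ π 0 ω ≤ 1)
    (hMAR : π 0 =ᵐ[P] P[R 0 | 𝒢])
    (hHmeas : StronglyMeasurable[𝒢] (H 0)) (hHint : Integrable (H 0) P)
    (hρmismeas : StronglyMeasurable[m] (ρmis 0)) (hρmisint : Integrable (ρmis 0) P) :
    ∀ᵐ ω ∂P, Tendsto (fun n : ℕ => (n : ℝ)⁻¹ * ∑ i ∈ Finset.range n, g i ω)
      atTop (nhds (∫ ω, H 0 ω ∂P)) := by
  have hπ𝒢 : StronglyMeasurable[𝒢] (π 0) := hπmeas.mono hm𝒢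
  have hρ𝒢 : StronglyMeasurable[𝒢] (ρmis 0) := hρmismeas.mono hm𝒢
  set φ : Ω → ℝ := fun ω => (H 0 ω - ρmis 0 ω) / π 0 ω with hφdef
  have hφ𝒢 : StronglyMeasurable[𝒢] φ :=
    ((hHmeas.measurable.sub hρ𝒢.measurable).div hπ𝒢.measurable).stronglyMeasurable
  have hφint : Integrable φ P := by
    refine Integrable.mono' (((hHint.sub hρmisint).norm).const_mul ε⁻¹)
      ((hφ𝒢.mono h𝒢).aestronglyMeasurable) ?_
    filter_upwards [hπbdd] with ω hω
    obtain ⟨h1, h2⟩ := hω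
    have hπpos : 0 < π 0 ω := lt_of_lt_of_le hε h1
    simp only [hφdef, norm_div, Real.norm_eq_abs, abs_of_pos hπpos]
    rw [div_eq_inv_mul]
    gcongr ?_ * ?_
    all_goals first | exact abs_nonneg _ | exact inv_anti₀ hε h1 | exact le_rfl
  have hRbd : ∀ ω, |R 0 ω| ≤ 1 := by
    intro ω; rcases hR01 ω with h | h <;> simp [h]
  have hRint : Integrable (R 0) P := by
    refine Integrable.mono' (integrable_const 1) (hR.aestronglyMeasurable (μ := P)) ?_
    exact Filter.Eventually.of_forall hRbd
  have hφRint : Integrable (φ * R 0) P := by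
    refine Integrable.mono' hφint.norm
      ((hφ𝒢.mono h𝒢).aestronglyMeasurable.mul (hR.aestronglyMeasurable (μ := P))) ?_
    refine Filter.Eventually.of_forall fun ω => ?_
    simp only [Pi.mul_apply, norm_mul, Real.norm_eq_abs]
    calc |φ ω| * |R 0 ω| ≤ |φ ω| * 1 := by gcongr; exact hRbd ω
    _ = |φ ω| := mul_one _
  -- g 0 = ρmis 0 + φ * R 0 pointwise
  have hgid : ∀ ω, g 0 ω = ρmis 0 ω + φ ω * R 0 ω := by
    intro ω
    rw [hg]
    simp only [hφdef]
    ring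
  -- ∫ φ * R 0 = ∫ (H 0 - ρmis 0)
  have key : ∫ ω, φ ω * R 0 ω ∂P = ∫ ω, (H 0 ω - ρmis 0 ω) ∂P := by
    have h1 : ∫ ω, φ ω * R 0 ω ∂P = ∫ ω, (P[φ * R 0|𝒢]) ω ∂P := by
      have := (integral_condExp h𝒢 (f := φ * R 0) (μ := P)).symm
      simpa using this
    have h2 : P[φ * R 0|𝒢] =ᵐ[P] φ * P[R 0|𝒢] :=
      condExp_mul_of_stronglyMeasurable_left hφ𝒢 hφRint hRint
    have h3 : φ * P[R 0|𝒢] =ᵐ[P] fun ω => (H 0 ω - ρmis 0 ω) := by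
      filter_upwards [hMAR, hπbdd] with ω hω hb
      have hπpos : π 0 ω ≠ 0 := (lt_of_lt_of_le hε hb.1).ne'
      simp only [Pi.mul_apply, ← hω, hφdef]
      field_simp
    calc ∫ ω, φ ω * R 0 ω ∂P = ∫ ω, (P[φ * R 0|𝒢]) ω ∂P := h1
    _ = ∫ ω, (H 0 ω - ρmis 0 ω) ∂P := integral_congr_ae (h2.trans h3)
  have hEg : ∫ ω, g 0 ω ∂P = ∫ ω, H 0 ω ∂P := by
    have : ∫ ω, g 0 ω ∂P = ∫ ω, (ρmis 0 ω + φ ω * R 0 ω) ∂P :=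
      integral_congr_ae (Filter.Eventually.of_forall hgid)
    rw [this, integral_add hρmisint (by exact hφRint), key,
      integral_sub hHint hρmisint]
    ring
  have hpair : Pairwise (Function.onFun (IndepFun · · P) g) := fun i j hij => hindep.indepFun hij
  have := strong_law_ae_real g (hgint 0) hpair hident
  filter_upwards [this] with ω hω
  have : (∫ ω, H 0 ω ∂P) = P[g 0] := by rw [hEg]
  rw [this]
  convert hω using 2 with n
  rw [div_eq_inv_mul]
end
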